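/- arXiv:2605.25769 — 3 statements merged into one kernel-verified Lean document; each statement's English description precedes it below -/
import Mathlib

section
/- Let N ≥ 1, M ≥ 1 be integers and ρ ∈ [0,1), σ > 0. Define the OP upper bound P̃(γ) = (1/(N−1)!)·γ_inc(N, γ)·(1 − exp(−2γ/(σ²(1−ρ²))))^{M−1}, where γ_inc is the lower incomplete gamma function. Then lim_{γ→0⁺} log P̃(γ)/log γ = N + M − 1. -/
/-!
Up to a nonzero constant, `P̃(γ)` behaves like `γ ^ (N + M - 1)` as `γ → 0⁺`: rescaling `t = γ s`
gives `γ_inc(N, γ) ~ γ ^ N / N`, and `1 - exp (-a γ) ~ a γ`. Whenever `f γ / γ ^ d` has a nonzero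
limit, `log (f γ) = d log γ + O(1)`, and dividing by `log γ → -∞` leaves `d`.
-/

open Filter Topology Real

theorem tendsto_log_div_log_of_tendsto_div_rpow {f : ℝ → ℝ} {d L : ℝ} (hL : L ≠ 0)
    (hf : Tendsto (fun x => f x / x ^ d) (𝓝[>] 0) (𝓝 L)) :
    Tendsto (fun x => log (f x) / log x) (𝓝[>] 0) (𝓝 d) := by
  have hrem : Tendsto (fun x => log (f x / x ^ d) / log x) (𝓝[>] 0) (𝓝 0) :=
    (hf.log hL).div_atBot tendsto_log_nhdsGT_zero
  have hsplit : ∀ᶠ x in 𝓝[>] 0,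
      d + log (f x / x ^ d) / log x = log (f x) / log x := by
    filter_upwards [hf.eventually_ne hL, Ioo_mem_nhdsGT one_pos] with x hfx ⟨hx0, hx1⟩
    have hlog : log x ≠ 0 := (log_neg hx0 hx1).ne
    have hf0 : f x ≠ 0 := fun h => hfx (by simp [h])
    rw [log_div hf0 (rpow_pos_of_pos hx0 d).ne', log_rpow hx0]
    field_simp
    ring
  simpa using (hrem.const_add d).congr' hsplit

theorem integral_pow_mul_eq_pow_mul_integral (g : ℝ → ℝ) (n : ℕ) (x : ℝ) :
    ∫ t in 0..x, t ^ n * g t = x ^ (n + 1) * ∫ s in 0..1, s ^ n * g (x * s) := by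
  have h := intervalIntegral.smul_integral_comp_mul_left (fun t => t ^ n * g t) x (a := 0) (b := 1)
  simp only [mul_zero, mul_one, smul_eq_mul, mul_pow] at h
  rw [← h, pow_succ', mul_assoc, ← intervalIntegral.integral_const_mul (x ^ n)]
  simp only [mul_assoc]

theorem tendsto_integral_pow_mul_div_pow {g : ℝ → ℝ} (hg : Continuous g) (n : ℕ) :
    Tendsto (fun x => (∫ t in 0..x, t ^ n * g t) / x ^ (n + 1)) (𝓝[≠] 0)
      (𝓝 (g 0 / (n + 1))) := by
  have hcont : Continuous fun x => ∫ s in (0:ℝ)..1, s ^ n * g (x * s) :=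
    intervalIntegral.continuous_parametric_intervalIntegral_of_continuous' (by fun_prop) 0 1
  have h0 : ∫ s in (0:ℝ)..1, s ^ n * g (0 * s) = g 0 / (n + 1) := by
    simp [integral_pow, div_eq_inv_mul, mul_comm]
  rw [← h0]
  refine (hcont.tendsto 0).mono_left nhdsWithin_le_nhds |>.congr' ?_
  filter_upwards [self_mem_nhdsWithin] with x hx
  rw [integral_pow_mul_eq_pow_mul_integral g n x, mul_div_cancel_left₀ _ (pow_ne_zero _ hx)]

theorem tendsto_one_sub_exp_neg_mul_div (a : ℝ) :
    Tendsto (fun x => (1 - exp (-(a * x))) / x) (𝓝[≠] 0) (𝓝 a) := by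
  have hd : HasDerivAt (fun x => 1 - exp (-(a * x))) a 0 := by
    simpa using (((hasDerivAt_id (0:ℝ)).const_mul a).neg.exp).const_sub 1
  simpa [div_eq_inv_mul] using hd.tendsto_slope_zero

/-- Diversity order of the MISO-FAS model: for the OP upper bound
`P̃(γ) = (1/(N-1)!) γ_inc(N, γ) (1 - exp(-2γ/(σ²(1-ρ²))))^{M-1}`,
one has `lim_{γ→0⁺} log P̃(γ) / log γ = N + M - 1`. -/
theorem miso_fas_diversity_order
    (N M : ℕ) (hN : 1 ≤ N) (hM : 1 ≤ M) (ρ σ : ℝ)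
    (hρ : ρ ∈ Set.Ico (0:ℝ) 1) (hσ : 0 < σ) :
    Tendsto (fun γ : ℝ =>
        Real.log ((1 / (Nat.factorial (N - 1) : ℝ)) *
            (∫ t in (0:ℝ)..γ, t ^ (N - 1) * Real.exp (-t)) *
            (1 - Real.exp (-(2 * γ / (σ ^ 2 * (1 - ρ ^ 2))))) ^ (M - 1)) /
          Real.log γ)
      (nhdsWithin 0 (Set.Ioi 0)) (nhds ((N : ℝ) + M - 1)) := by
  obtain ⟨n, rfl⟩ := Nat.exists_eq_add_of_le' hN
  obtain ⟨m, rfl⟩ := Nat.exists_eq_add_of_le' hM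
  set D := σ ^ 2 * (1 - ρ ^ 2)
  have hD : D ≠ 0 := mul_ne_zero (pow_ne_zero 2 hσ.ne') (by nlinarith [hρ.1, hρ.2])
  have hgamma := (tendsto_integral_pow_mul_div_pow continuous_neg.rexp n).mono_left
    (nhdsGT_le_nhdsNE (0:ℝ))
  have hexp := (tendsto_one_sub_exp_neg_mul_div (2 / D)).mono_left (nhdsGT_le_nhdsNE (0:ℝ))
  have hratio := (tendsto_const_nhds (x := 1 / (n.factorial : ℝ))).mul hgamma |>.mul (hexp.pow m)
  have hd : ((n + 1 : ℕ) : ℝ) + ((m + 1 : ℕ) : ℝ) - 1 = ((n + 1 + m : ℕ) : ℝ) := by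
    push_cast; ring
  simp only [Nat.add_sub_cancel, hd]
  refine tendsto_log_div_log_of_tendsto_div_rpow ?_ (hratio.congr' ?_)
  · simp [hD, Nat.factorial_ne_zero]
    positivity
  filter_upwards [self_mem_nhdsWithin] with γ (hγ : 0 < γ)
  replace hγ := hγ.ne'
  rw [rpow_natCast, div_mul_eq_mul_div 2 D γ, div_pow]
  field_simp
  ring
end

section
/- Let M_R, M_T ≥ 1 be integers and ρ₁, ρ₂ ∈ [0,1). Define P̃(γ) = (1 − e^{−γ})·(1 − e^{−γ/(1−ρ₁²)})^{M_R−1}·(1 − e^{−γ/(1−ρ₂²)})^{M_T−1}·(1 − e^{−γ/(1−ρ₁²ρ₂²)})^{(M_R−1)(M_T−1)}. Then lim_{γ→0⁺} log P̃(γ)/log γ = M_R·M_T. -/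
open Filter


lemma fas_pos {c γ : ℝ} (hc : 0 < c) (hγ : 0 < γ) :
    0 < 1 - Real.exp (-(γ / c)) := by
  have h : 0 < γ / c := by positivity
  have h2 : Real.exp (-(γ / c)) < 1 := Real.exp_lt_one_iff.mpr (by linarith)
  linarith

lemma fas_aux (c : ℝ) (hc : 0 < c) :
    Tendsto (fun γ : ℝ => Real.log (1 - Real.exp (-(γ / c))) / Real.log γ)
      (nhdsWithin 0 (Set.Ioi 0)) (nhds 1) := by
  set f : ℝ → ℝ := fun γ => 1 - Real.exp (-(γ / c)) with hfdef
  have hf : HasDerivAt f (1 / c) 0 := by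
    have h1 : HasDerivAt (fun γ : ℝ => -(γ / c)) (-(1 / c)) 0 :=
      ((hasDerivAt_id (0 : ℝ)).div_const c).neg
    have h2 := h1.exp
    have h3 := h2.const_sub 1
    simpa [inv_neg] using h3
  have hslope := hasDerivAt_iff_tendsto_slope.mp hf
  have T1 : Tendsto (fun γ : ℝ => f γ / γ) (nhdsWithin 0 (Set.Ioi 0)) (nhds (1 / c)) := by
    have := hslope.mono_left (nhdsWithin_mono 0 (fun x hx => ne_of_gt hx : Set.Ioi (0:ℝ) ⊆ {0}ᶜ))
    refine this.congr (fun γ => ?_)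
    simp [slope_fun_def, hfdef]; ring
  have hlog1 : Tendsto (fun γ : ℝ => Real.log (f γ / γ)) (nhdsWithin 0 (Set.Ioi 0))
      (nhds (Real.log (1 / c))) :=
    (Real.continuousAt_log (by positivity)).tendsto.comp T1
  have hinv : Tendsto (fun γ : ℝ => (Real.log γ)⁻¹) (nhdsWithin 0 (Set.Ioi 0)) (nhds 0) := by
    have h' : Tendsto (fun γ : ℝ => -Real.log γ) (nhdsWithin 0 (Set.Ioi 0)) atTop :=
      tendsto_neg_atBot_atTop.comp Real.tendsto_log_nhdsGT_zero
    have h2 : Tendsto (fun γ : ℝ => (-Real.log γ)⁻¹) (nhdsWithin 0 (Set.Ioi 0)) (nhds 0) :=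
      h'.inv_tendsto_atTop
    have h3 := h2.neg
    simpa [inv_neg] using h3
  have hz : Tendsto (fun γ : ℝ => Real.log (f γ / γ) * (Real.log γ)⁻¹ + 1)
      (nhdsWithin 0 (Set.Ioi 0)) (nhds 1) := by
    have := (hlog1.mul hinv).add (tendsto_const_nhds : Tendsto (fun _ : ℝ => (1:ℝ)) _ _)
    simpa using this
  refine hz.congr' ?_
  filter_upwards [Ioo_mem_nhdsGT_of_mem (by norm_num : (0:ℝ) ∈ Set.Ico 0 1)] with γ hγ
  obtain ⟨hγ0, hγ1⟩ := hγ
  have hfpos : 0 < f γ := fas_pos hc hγ0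
  have hlogne : Real.log γ ≠ 0 := ne_of_lt (Real.log_neg hγ0 hγ1)
  rw [Real.log_div (ne_of_gt hfpos) (ne_of_gt hγ0)]
  field_simp
  ring

/-- Diversity order of the Dual-FAS model: for the OP upper bound
`P̃(γ) = (1-e^{-γ})(1-e^{-γ/(1-ρ₁²)})^{M_R-1}(1-e^{-γ/(1-ρ₂²)})^{M_T-1}
        (1-e^{-γ/(1-ρ₁²ρ₂²)})^{(M_R-1)(M_T-1)}`,
one has `lim_{γ→0⁺} log P̃(γ)/log γ = M_R M_T`. -/
theorem dual_fas_diversity_order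
    (MR MT : ℕ) (hMR : 1 ≤ MR) (hMT : 1 ≤ MT) (ρ₁ ρ₂ : ℝ)
    (hρ₁ : ρ₁ ∈ Set.Ico (0:ℝ) 1) (hρ₂ : ρ₂ ∈ Set.Ico (0:ℝ) 1) :
    Tendsto (fun γ : ℝ =>
        Real.log ((1 - Real.exp (-γ)) *
            (1 - Real.exp (-(γ / (1 - ρ₁ ^ 2)))) ^ (MR - 1) *
            (1 - Real.exp (-(γ / (1 - ρ₂ ^ 2)))) ^ (MT - 1) *
            (1 - Real.exp (-(γ / (1 - ρ₁ ^ 2 * ρ₂ ^ 2)))) ^ ((MR - 1) * (MT - 1))) /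
          Real.log γ)
      (nhdsWithin 0 (Set.Ioi 0)) (nhds ((MR : ℝ) * MT)) := by
  obtain ⟨hρ₁0, hρ₁1⟩ := hρ₁
  obtain ⟨hρ₂0, hρ₂1⟩ := hρ₂
  have h1 : (0:ℝ) < 1 - ρ₁ ^ 2 := by nlinarith
  have h2 : (0:ℝ) < 1 - ρ₂ ^ 2 := by nlinarith
  have h3 : (0:ℝ) < 1 - ρ₁ ^ 2 * ρ₂ ^ 2 := by nlinarith
  have TA : Tendsto (fun γ : ℝ => Real.log (1 - Real.exp (-γ)) / Real.log γ)
      (nhdsWithin 0 (Set.Ioi 0)) (nhds 1) := by simpa using fas_aux 1 one_pos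
  have TB := fas_aux (1 - ρ₁ ^ 2) h1
  have TC := fas_aux (1 - ρ₂ ^ 2) h2
  have TD := fas_aux (1 - ρ₁ ^ 2 * ρ₂ ^ 2) h3
  have key : Tendsto (fun γ : ℝ =>
      Real.log (1 - Real.exp (-γ)) / Real.log γ
      + ((MR - 1 : ℕ) : ℝ) * (Real.log (1 - Real.exp (-(γ / (1 - ρ₁ ^ 2)))) / Real.log γ)
      + ((MT - 1 : ℕ) : ℝ) * (Real.log (1 - Real.exp (-(γ / (1 - ρ₂ ^ 2)))) / Real.log γ)
      + (((MR - 1) * (MT - 1) : ℕ) : ℝ) *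
          (Real.log (1 - Real.exp (-(γ / (1 - ρ₁ ^ 2 * ρ₂ ^ 2)))) / Real.log γ))
      (nhdsWithin 0 (Set.Ioi 0))
      (nhds (1 + ((MR - 1 : ℕ) : ℝ) * 1 + ((MT - 1 : ℕ) : ℝ) * 1
        + (((MR - 1) * (MT - 1) : ℕ) : ℝ) * 1)) :=
    ((TA.add (TB.const_mul _)).add (TC.const_mul _)).add (TD.const_mul _)
  have hval : (1 + ((MR - 1 : ℕ) : ℝ) * 1 + ((MT - 1 : ℕ) : ℝ) * 1
      + (((MR - 1) * (MT - 1) : ℕ) : ℝ) * 1) = (MR : ℝ) * MT := by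
    push_cast [Nat.cast_sub hMR, Nat.cast_sub hMT]
    ring
  rw [← hval]
  refine Tendsto.congr' ?_ key
  filter_upwards [self_mem_nhdsWithin] with γ hγ0
  have hγ : (0:ℝ) < γ := hγ0
  have ha : 0 < 1 - Real.exp (-γ) := by simpa using fas_pos one_pos hγ
  have hb : 0 < 1 - Real.exp (-(γ / (1 - ρ₁ ^ 2))) := fas_pos h1 hγ
  have hc : 0 < 1 - Real.exp (-(γ / (1 - ρ₂ ^ 2))) := fas_pos h2 hγ
  have hd : 0 < 1 - Real.exp (-(γ / (1 - ρ₁ ^ 2 * ρ₂ ^ 2))) := fas_pos h3 hγ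
  rw [Real.log_mul (by positivity) (by positivity),
      Real.log_mul (by positivity) (by positivity),
      Real.log_mul (by positivity) (by positivity),
      Real.log_pow, Real.log_pow, Real.log_pow]
  ring
end

section
/- For real numbers a, b with 0 ≤ a < b and integer ν ≥ 1, the generalized Marcum Q-function satisfies Q_ν(a, b) ≥ e^{−b²/2}. -/
open MeasureTheory

/-- Modified Bessel function of the first kind of integer order `n`. -/
noncomputable def besselI (n : ℕ) (x : ℝ) : ℝ :=
  ∑' m : ℕ, (x / 2) ^ (2 * m + n) / ((Nat.factorial m : ℝ) * (Nat.factorial (m + n) : ℝ))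

/-- Generalized Marcum Q-function of order `ν`:
`Q_ν(a,b) = ∫_b^∞ x (x/a)^{ν-1} exp(-(x²+a²)/2) I_{ν-1}(ax) dx` for `a ≠ 0`,
with the limiting value `Q_ν(0,b) = e^{-b²/2} ∑_{k=0}^{ν-1} b^{2k}/(2^k k!)`. -/
noncomputable def marcumQ (ν : ℕ) (a b : ℝ) : ℝ :=
  if a = 0 then
    Real.exp (-b ^ 2 / 2) * ∑ k ∈ Finset.range ν, b ^ (2 * k) / (2 ^ k * (Nat.factorial k : ℝ))
  else
    ∫ x in Set.Ioi b,
      x * (x / a) ^ (ν - 1) * Real.exp (-(x ^ 2 + a ^ 2) / 2) * besselI (ν - 1) (a * x)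

/-!
Expanding `I_n` (`n = ν - 1`) in its power series, the `m`-th term of the integrand of `Q_ν(a, b)`
is a nonnegative multiple of `x^(2(m+n)+1) e^{-x²/2}`. Integration by parts gives
`∫_b^∞ x^(2k+1) e^{-x²/2} dx ≥ 2^k k! e^{-b²/2}`, so the integral of the `m`-th term is at least
`e^{-a²/2} (a²/2)^m / m! · e^{-b²/2}`, and these lower bounds sum to `e^{-b²/2}`.
For `a = 0` the claim is the `k = 0` term of the finite sum.
-/

open Real Set Filter Topology Nat

theorem Nat.factorial_add_le_two_pow_mul (p q : ℕ) : (p + q)! ≤ 2 ^ (p + q) * (p ! * q !) := by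
  rw [← add_choose_mul_factorial_mul_factorial p q, mul_assoc]
  exact Nat.mul_le_mul_right _ (choose_le_two_pow _ _)

noncomputable def besselITerm (n m : ℕ) (x : ℝ) : ℝ :=
  (x / 2) ^ (2 * m + n) / ((m ! : ℝ) * ((m + n)! : ℝ))

theorem besselI_eq_tsum (n : ℕ) (x : ℝ) : besselI n x = ∑' m, besselITerm n m x := rfl

theorem abs_besselITerm_le (n m : ℕ) (x : ℝ) :
    |besselITerm n m x| ≤ |x| ^ (2 * m + n) / (2 * m + n)! := by
  have hfac : ((2 * m + n)! : ℝ) ≤ 2 ^ (2 * m + n) * (m ! * (m + n)!) := by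
    rw [show 2 * m + n = m + (m + n) by ring]
    exact_mod_cast Nat.factorial_add_le_two_pow_mul m (m + n)
  rw [besselITerm, abs_div, abs_pow, abs_div, abs_two,
    abs_of_nonneg (by positivity : (0 : ℝ) ≤ m ! * (m + n)!), div_pow, div_div]
  gcongr

theorem summable_pow_div_factorial_two_mul_add (n : ℕ) (y : ℝ) :
    Summable fun m : ℕ => y ^ (2 * m + n) / (2 * m + n)! :=
  (Real.summable_pow_div_factorial y).comp_injective (i := fun m => 2 * m + n)
    fun _ _ h => by dsimp only at h; omega

theorem summable_besselITerm (n : ℕ) (x : ℝ) : Summable fun m => besselITerm n m x :=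
  .of_norm_bounded (summable_pow_div_factorial_two_mul_add n |x|) (abs_besselITerm_le n · x)

theorem besselI_nonneg (n : ℕ) {y : ℝ} (hy : 0 ≤ y) : 0 ≤ besselI n y :=
  tsum_nonneg fun _ => by positivity

theorem besselI_le_exp (n : ℕ) {y : ℝ} (hy : 0 ≤ y) : besselI n y ≤ exp y := calc
  besselI n y ≤ ∑' m : ℕ, y ^ (2 * m + n) / (2 * m + n)! :=
    (summable_besselITerm n y).tsum_le_tsum
      (fun m => (le_abs_self _).trans <|
        (abs_besselITerm_le n m y).trans_eq (by rw [abs_of_nonneg hy]))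
      (summable_pow_div_factorial_two_mul_add n y)
  _ ≤ ∑' k : ℕ, y ^ k / k ! :=
    (summable_pow_div_factorial_two_mul_add n y).tsum_le_tsum_of_inj (fun m => 2 * m + n)
      (fun _ _ h => by dsimp only at h; omega) (fun _ _ => by positivity) (fun _ => le_rfl)
      (Real.summable_pow_div_factorial y)
  _ = exp y := by rw [exp_eq_exp_ℝ, NormedSpace.exp_eq_tsum_div]

theorem measurable_besselI (n : ℕ) : Measurable (besselI n) := by
  refine measurable_of_tendsto_metrizable (f := fun M x => ∑ m ∈ Finset.range M, besselITerm n m x)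
    (fun M => Finset.measurable_sum _ fun m _ => by unfold besselITerm; fun_prop) ?_
  exact tendsto_pi_nhds.2 fun x => (summable_besselITerm n x).hasSum.tendsto_sum_nat

theorem integrable_pow_mul_exp_neg_mul_sq (k : ℕ) {c : ℝ} (hc : 0 < c) :
    Integrable fun x : ℝ => x ^ k * exp (-c * x ^ 2) := by
  simpa only [rpow_natCast] using
    integrable_rpow_mul_exp_neg_mul_sq hc (s := k) (by linarith [k.cast_nonneg (α := ℝ)])

theorem integrable_pow_mul_exp_neg_sq_half (k : ℕ) :
    Integrable fun x : ℝ => x ^ k * exp (-x ^ 2 / 2) := by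
  simpa only [neg_div, neg_mul, one_div, inv_mul_eq_div] using
    integrable_pow_mul_exp_neg_mul_sq k (c := 1 / 2) one_half_pos

theorem tendsto_pow_mul_exp_neg_sq_half (k : ℕ) :
    Tendsto (fun x : ℝ => x ^ k * exp (-x ^ 2 / 2)) atTop (𝓝 0) := by
  have h := (rpow_mul_exp_neg_mul_sq_isLittleO_exp_neg one_half_pos (k : ℝ)).trans_tendsto
    (tendsto_exp_atBot.comp (tendsto_id.const_mul_atTop_of_neg (by norm_num)))
  refine h.congr' ?_
  filter_upwards [eventually_ge_atTop 0] with x hx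
  simp [rpow_natCast, neg_div, inv_mul_eq_div]

theorem hasDerivAt_exp_neg_sq_half (x : ℝ) :
    HasDerivAt (fun x : ℝ => exp (-x ^ 2 / 2)) (-x * exp (-x ^ 2 / 2)) x := by
  have h : HasDerivAt (fun x : ℝ => -x ^ 2 / 2) (-x) x :=
    ((hasDerivAt_pow 2 x).neg.div_const 2).congr_deriv (by ring)
  exact h.exp.congr_deriv (by ring)

theorem integral_Ioi_mul_exp_neg_sq_half (b : ℝ) :
    ∫ x in Ioi b, x * exp (-x ^ 2 / 2) = exp (-b ^ 2 / 2) := by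
  rw [integral_Ioi_of_hasDerivAt_of_tendsto' (f := fun x => -exp (-x ^ 2 / 2))
    (m := 0) (fun x _ => (hasDerivAt_exp_neg_sq_half x).neg.congr_deriv (by ring))
    (by simpa using (integrable_pow_mul_exp_neg_sq_half 1).integrableOn)
    (by simpa using (tendsto_pow_mul_exp_neg_sq_half 0).neg)]
  simp

theorem integral_Ioi_pow_add_two_mul_exp_neg_sq_half (j : ℕ) (b : ℝ) :
    ∫ x in Ioi b, x ^ (j + 2) * exp (-x ^ 2 / 2) =
      b ^ (j + 1) * exp (-b ^ 2 / 2) + (j + 1) * ∫ x in Ioi b, x ^ j * exp (-x ^ 2 / 2) := by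
  have hparts : ∫ x in Ioi b, (x ^ (j + 2) * exp (-x ^ 2 / 2) - (j + 1) * (x ^ j * exp (-x ^ 2 / 2)))
      = 0 - -(b ^ (j + 1) * exp (-b ^ 2 / 2)) := by
    refine integral_Ioi_of_hasDerivAt_of_tendsto' (f := fun x => -(x ^ (j + 1) * exp (-x ^ 2 / 2)))
      (fun x _ => ?_) ?_ (by simpa using (tendsto_pow_mul_exp_neg_sq_half (j + 1)).neg)
    · refine ((hasDerivAt_pow (j + 1) x).mul (hasDerivAt_exp_neg_sq_half x)).neg.congr_deriv ?_
      push_cast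
      ring
    · exact ((integrable_pow_mul_exp_neg_sq_half _).sub
        ((integrable_pow_mul_exp_neg_sq_half j).const_mul _)).integrableOn
  rw [integral_sub (integrable_pow_mul_exp_neg_sq_half _).integrableOn
    ((integrable_pow_mul_exp_neg_sq_half j).const_mul _).integrableOn, integral_const_mul] at hparts
  linarith

theorem two_pow_mul_factorial_mul_exp_le_integral_Ioi (k : ℕ) (b : ℝ) :
    2 ^ k * (k ! : ℝ) * exp (-b ^ 2 / 2) ≤ ∫ x in Ioi b, x ^ (2 * k + 1) * exp (-x ^ 2 / 2) := by
  induction k with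
  | zero => simp [integral_Ioi_mul_exp_neg_sq_half]
  | succ k ih =>
    rw [show 2 * (k + 1) + 1 = 2 * k + 1 + 2 by ring, integral_Ioi_pow_add_two_mul_exp_neg_sq_half]
    have hb : 0 ≤ b ^ (2 * k + 1 + 1) * exp (-b ^ 2 / 2) :=
      mul_nonneg ((even_two_mul (k + 1)).pow_nonneg b) (exp_pos _).le
    calc 2 ^ (k + 1) * ((k + 1)! : ℝ) * exp (-b ^ 2 / 2)
        = (2 * k + 1 + 1) * (2 ^ k * k ! * exp (-b ^ 2 / 2)) := by
          rw [factorial_succ]; push_cast; ring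
      _ ≤ (2 * k + 1 + 1) * ∫ x in Ioi b, x ^ (2 * k + 1) * exp (-x ^ 2 / 2) := by gcongr
      _ ≤ _ := by push_cast; linarith

theorem hasSum_exp_mul_pow_div_factorial (a b : ℝ) :
    HasSum (fun m : ℕ => exp (-a ^ 2 / 2) * ((a ^ 2 / 2) ^ m / m !) * exp (-b ^ 2 / 2))
      (exp (-b ^ 2 / 2)) := by
  have h := ((NormedSpace.expSeries_div_hasSum_exp (a ^ 2 / 2)).mul_left
    (exp (-a ^ 2 / 2))).mul_right (exp (-b ^ 2 / 2))
  rwa [← exp_eq_exp_ℝ, ← exp_add, show -a ^ 2 / 2 + a ^ 2 / 2 = 0 by ring, exp_zero, one_mul] at h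

noncomputable def marcumWeight (n : ℕ) (a x : ℝ) : ℝ := x * (x / a) ^ n * exp (-(x ^ 2 + a ^ 2) / 2)

theorem marcumQ_of_ne_zero (ν : ℕ) {a : ℝ} (ha : a ≠ 0) (b : ℝ) :
    marcumQ ν a b = ∫ x in Ioi b, marcumWeight (ν - 1) a x * besselI (ν - 1) (a * x) :=
  if_neg ha

theorem exp_neg_sq_half_le_marcumQ_zero {ν : ℕ} (hν : 1 ≤ ν) (b : ℝ) :
    exp (-b ^ 2 / 2) ≤ marcumQ ν 0 b := by
  have hsum : 1 ≤ ∑ k ∈ Finset.range ν, b ^ (2 * k) / (2 ^ k * (k ! : ℝ)) := by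
    simpa using Finset.single_le_sum (f := fun k => b ^ (2 * k) / (2 ^ k * (k ! : ℝ)))
      (fun k _ => div_nonneg ((even_two_mul k).pow_nonneg b) (by positivity))
      (Finset.mem_range.2 hν)
  rw [marcumQ, if_pos rfl]
  exact le_mul_of_one_le_right (exp_pos _).le hsum

section

variable (n : ℕ) {a : ℝ}

theorem marcumWeight_mul_besselITerm (ha : a ≠ 0) (m : ℕ) (x : ℝ) :
    marcumWeight n a x * besselITerm n m (a * x) =
      a ^ (2 * m) * exp (-a ^ 2 / 2) / (2 ^ (2 * m + n) * (m ! * (m + n)!)) *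
        (x ^ (2 * (m + n) + 1) * exp (-x ^ 2 / 2)) := by
  have hexp : exp (-(x ^ 2 + a ^ 2) / 2) = exp (-x ^ 2 / 2) * exp (-a ^ 2 / 2) := by
    rw [← exp_add]; ring_nf
  rw [marcumWeight, besselITerm, hexp]
  simp only [div_pow, mul_pow]
  field_simp
  ring

theorem integrable_marcumWeight_mul_besselITerm (ha : a ≠ 0) (m : ℕ) :
    Integrable fun x => marcumWeight n a x * besselITerm n m (a * x) := by
  simp_rw [marcumWeight_mul_besselITerm n ha]
  exact (integrable_pow_mul_exp_neg_sq_half _).const_mul _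

theorem exp_mul_pow_div_factorial_le_integral_marcumWeight_mul_besselITerm (ha : a ≠ 0) (m : ℕ)
    (b : ℝ) : exp (-a ^ 2 / 2) * ((a ^ 2 / 2) ^ m / m !) * exp (-b ^ 2 / 2) ≤
      ∫ x in Ioi b, marcumWeight n a x * besselITerm n m (a * x) := by
  simp_rw [marcumWeight_mul_besselITerm n ha, integral_const_mul]
  calc exp (-a ^ 2 / 2) * ((a ^ 2 / 2) ^ m / m !) * exp (-b ^ 2 / 2)
      = a ^ (2 * m) * exp (-a ^ 2 / 2) / (2 ^ (2 * m + n) * (m ! * (m + n)!)) *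
          (2 ^ (m + n) * ((m + n)! : ℝ) * exp (-b ^ 2 / 2)) := by
        rw [show 2 * m + n = m + (m + n) by ring, pow_add, pow_mul, div_pow]
        field_simp
    _ ≤ _ := mul_le_mul_of_nonneg_left (two_pow_mul_factorial_mul_exp_le_integral_Ioi (m + n) b) <|
        div_nonneg (mul_nonneg ((even_two_mul m).pow_nonneg a) (exp_pos _).le) (by positivity)

theorem sum_marcumWeight_mul_besselITerm_le (ha : 0 < a) {x : ℝ} (hx : 0 ≤ x) (M : ℕ) :
    ∑ m ∈ Finset.range M, marcumWeight n a x * besselITerm n m (a * x) ≤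
      marcumWeight n a x * besselI n (a * x) := by
  rw [← Finset.mul_sum, besselI_eq_tsum]
  exact mul_le_mul_of_nonneg_left ((summable_besselITerm n _).sum_le_tsum _
    fun m _ => by unfold besselITerm; positivity) (by unfold marcumWeight; positivity)

/-- Since `I_n(ax) ≤ e^{ax} ≤ e^{x²/4 + a²}`, the integrand is dominated by a multiple of
`x^(n+1) e^{-x²/4}`. -/
theorem integrableOn_marcumWeight_mul_besselI (ha : 0 < a) :
    IntegrableOn (fun x => marcumWeight n a x * besselI n (a * x)) (Ioi 0) := by
  refine Integrable.mono' ((integrable_pow_mul_exp_neg_mul_sq (n + 1) (c := 1 / 4)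
    (by norm_num)).const_mul (exp (a ^ 2 / 2) / a ^ n)).integrableOn
    ((by unfold marcumWeight; fun_prop : Measurable (marcumWeight n a)).mul
      ((measurable_besselI n).comp (measurable_const_mul a))).aestronglyMeasurable ?_
  filter_upwards [ae_restrict_mem measurableSet_Ioi] with x (hx : 0 < x)
  have hw : 0 ≤ marcumWeight n a x := by unfold marcumWeight; positivity
  rw [norm_of_nonneg (mul_nonneg hw (besselI_nonneg n (by positivity)))]
  calc marcumWeight n a x * besselI n (a * x) ≤ marcumWeight n a x * exp (x ^ 2 / 4 + a ^ 2) := by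
        gcongr
        refine (besselI_le_exp n (by positivity)).trans (exp_le_exp.2 ?_)
        nlinarith [sq_nonneg (x / 2 - a)]
    _ = _ := by
        rw [marcumWeight, mul_assoc, ← exp_add, div_pow, pow_succ x n,
          show -(x ^ 2 + a ^ 2) / 2 + (x ^ 2 / 4 + a ^ 2) = a ^ 2 / 2 + -(1 / 4) * x ^ 2 by ring,
          exp_add]
        field_simp

theorem exp_neg_sq_half_le_integral_marcumWeight_mul_besselI (ha : 0 < a) {b : ℝ} (hb : 0 ≤ b) :
    exp (-b ^ 2 / 2) ≤ ∫ x in Ioi b, marcumWeight n a x * besselI n (a * x) := by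
  refine le_of_tendsto (hasSum_exp_mul_pow_div_factorial a b).tendsto_sum_nat
    (Eventually.of_forall fun M => ?_)
  calc ∑ m ∈ Finset.range M, exp (-a ^ 2 / 2) * ((a ^ 2 / 2) ^ m / m !) * exp (-b ^ 2 / 2)
      ≤ ∑ m ∈ Finset.range M, ∫ x in Ioi b, marcumWeight n a x * besselITerm n m (a * x) :=
        Finset.sum_le_sum fun m _ =>
          exp_mul_pow_div_factorial_le_integral_marcumWeight_mul_besselITerm n ha.ne' m b
    _ = ∫ x in Ioi b, ∑ m ∈ Finset.range M, marcumWeight n a x * besselITerm n m (a * x) :=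
        (integral_finsetSum _ fun m _ =>
          (integrable_marcumWeight_mul_besselITerm n ha.ne' m).integrableOn).symm
    _ ≤ _ := setIntegral_mono_on
        (integrable_finsetSum _ fun m _ =>
          (integrable_marcumWeight_mul_besselITerm n ha.ne' m).integrableOn)
        ((integrableOn_marcumWeight_mul_besselI n ha).mono_set (Ioi_subset_Ioi hb))
        measurableSet_Ioi fun x hx => sum_marcumWeight_mul_besselITerm_le n ha (hb.trans hx.le) M

end

/-- Cauchy–Schwarz lower bound on the Marcum Q-function:
for `0 ≤ a < b` and `ν ≥ 1`, `Q_ν(a, b) ≥ e^{-b²/2}`. -/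
theorem marcumQ_ge_exp (ν : ℕ) (hν : 1 ≤ ν) (a b : ℝ) (ha : 0 ≤ a) (hab : a < b) :
    Real.exp (-b ^ 2 / 2) ≤ marcumQ ν a b := by
  rcases ha.eq_or_lt with rfl | ha
  · exact exp_neg_sq_half_le_marcumQ_zero hν b
  · rw [marcumQ_of_ne_zero ν ha.ne' b]
    exact exp_neg_sq_half_le_integral_marcumWeight_mul_besselI (ν - 1) ha (ha.le.trans hab.le)
end
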